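/- For any finite set Δ of L*-formulas and any L*-formula φ: Δ ⊬ φ if and only if Δ ∪ {−φ} is consistent, i.e., Δ, −φ ⊬ ⊥, where − is the contextual weak negation. -/
import Mathlib


namespace LAD

/-- L-formulas: built from atoms by extensional connectives ⊃, ∩, ∪, ∼. -/
inductive LForm (A : Type) where
  | atom : A → LForm A
  | eimp : LForm A → LForm A → LForm A
  | econj : LForm A → LForm A → LForm A
  | edisj : LForm A → LForm A → LForm A
  | eneg : LForm A → LForm A

/-- L*-formulas: L-formulas closed under intensional connectives →, ∧, ∨, ¬. -/
inductive SForm (A : Type) where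
  | base : LForm A → SForm A
  | iimp : SForm A → SForm A → SForm A
  | iconj : SForm A → SForm A → SForm A
  | idisj : SForm A → SForm A → SForm A
  | ineg : SForm A → SForm A

variable {A : Type}

/-- A possible world: an assignment of truth values to atoms. -/
abbrev World (A : Type) := A → Bool

/-- A context is a (nonempty) set of possible worlds. -/
abbrev Context (A : Type) := Set (World A)

/-- Classical truth of an L-formula at a world. -/
def LForm.truth (w : World A) : LForm A → Bool
  | .atom a => w a
  | .eimp α β => !α.truth w || β.truth w
  | .econj α β => α.truth w && β.truth w
  | .edisj α β => α.truth w || β.truth w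
  | .eneg α => !α.truth w

/-- Assertibility and deniability conditions, as a pair (⊩⁺, ⊩⁻). -/
def SForm.sem : SForm A → Context A → Prop × Prop
  | .base α, C => (∀ w ∈ C, α.truth w = true, ∀ w ∈ C, α.truth w = false)
  | .ineg φ, C => ((φ.sem C).2, (φ.sem C).1)
  | .idisj φ ψ, C => ((φ.sem C).1 ∨ (ψ.sem C).1, (φ.sem C).2 ∧ (ψ.sem C).2)
  | .iconj φ ψ, C => ((φ.sem C).1 ∧ (ψ.sem C).1, (φ.sem C).2 ∨ (ψ.sem C).2)
  | .iimp φ ψ, C =>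
      (∀ D : Context A, D.Nonempty → D ⊆ C → (φ.sem D).1 → (ψ.sem D).1,
       ∃ D : Context A, D.Nonempty ∧ D ⊆ C ∧ (φ.sem D).1 ∧ (ψ.sem D).2)

/-- C ⊩⁺ φ : assertibility. -/
def Assert (C : Context A) (φ : SForm A) : Prop := (φ.sem C).1

/-- C ⊩⁻ φ : deniability. -/
def Deny (C : Context A) (φ : SForm A) : Prop := (φ.sem C).2

/-- Δ ⊨ ψ : assertibility-preserving consequence. -/
def Entails (Δ : Set (SForm A)) (ψ : SForm A) : Prop :=
  ∀ C : Context A, C.Nonempty → (∀ δ ∈ Δ, Assert C δ) → Assert C ψ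


/-- Whether an L*-formula contains an occurrence of intensional implication. -/
def SForm.hasImp : SForm A → Bool
  | .base _ => false
  | .iimp _ _ => true
  | .iconj φ ψ => φ.hasImp || ψ.hasImp
  | .idisj φ ψ => φ.hasImp || ψ.hasImp
  | .ineg φ => φ.hasImp

/-- Whether an L*-formula contains no intensional implication in the scope of
an intensional negation. -/
def SForm.noImpUnderNeg : SForm A → Bool
  | .base _ => true
  | .iimp φ ψ => φ.noImpUnderNeg && ψ.noImpUnderNeg
  | .iconj φ ψ => φ.noImpUnderNeg && ψ.noImpUnderNeg
  | .idisj φ ψ => φ.noImpUnderNeg && ψ.noImpUnderNeg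
  | .ineg φ => !φ.hasImp

/-- A formula is safe if it contains no → in the scope of ¬, or is an implication. -/
def Safe (φ : SForm A) : Prop :=
  φ.noImpUnderNeg = true ∨ ∃ ψ χ, φ = SForm.iimp ψ χ

/-- The safe formulas of a set of premises. -/
def safePart (Δ : Set (SForm A)) : Set (SForm A) := {δ ∈ Δ | Safe δ}

/-- ⊥ := p ∩ ∼p for a fixed atom p. -/
def botF (p : A) : SForm A := .base (.econj (.atom p) (.eneg (.atom p)))

/-- ◇φ := ¬(φ → ⊥). -/
def dia (p : A) (φ : SForm A) : SForm A := .ineg (.iimp φ (botF p))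

/-- Iterated extensional conjunction of a list (true if empty). -/
def bigEConj (p : A) : List (LForm A) → LForm A
  | [] => .eimp (.atom p) (.atom p)
  | h :: t => t.foldl LForm.econj h

/-- Iterated extensional disjunction of a list (false if empty). -/
def bigEDisj (p : A) : List (LForm A) → LForm A
  | [] => .econj (.atom p) (.eneg (.atom p))
  | h :: t => t.foldl LForm.edisj h

/-- Iterated intensional conjunction of a list (true if empty). -/
def bigIConj (p : A) : List (SForm A) → SForm A
  | [] => .base (.eimp (.atom p) (.atom p))
  | h :: t => t.foldl SForm.iconj h

/-- Iterated intensional disjunction of a list (⊥ if empty). -/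
def bigIDisj (p : A) : List (SForm A) → SForm A
  | [] => botF p
  | h :: t => t.foldl SForm.idisj h

/-- α₁ ⊕ … ⊕ αₙ := (α₁ ∪ … ∪ αₙ) ∧ (◇α₁ ∧ … ∧ ◇αₙ). -/
def oplus (p : A) (l : List (LForm A)) : SForm A :=
  .iconj (.base (bigEDisj p l)) (bigIConj p (l.map fun α => dia p (.base α)))

/-- σ_w : the canonical description of a world w (A finite). -/
noncomputable def sigmaW [Fintype A] [DecidableEq A] (p : A) (w : World A) : LForm A :=
  bigEConj p ((Finset.univ : Finset A).toList.map
    (fun a => if w a then LForm.atom a else .eneg (.atom a)))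

/-- μ_C := σ_{w₁} ⊕ … ⊕ σ_{wₙ} for a finite context C = {w₁,…,wₙ}. -/
noncomputable def mu [Fintype A] [DecidableEq A] (p : A) (C : Finset (World A)) : SForm A :=
  oplus p (C.toList.map (sigmaW p))

/-- ξ_X := μ_{C₁} ∨ … ∨ μ_{C_k} for a finite set X = {C₁,…,C_k} of contexts. -/
noncomputable def xi [Fintype A] [DecidableEq A] (p : A) (X : Finset (Finset (World A))) : SForm A :=
  bigIDisj p (X.toList.map (mu p))

/-- φᵉ : replace every intensional connective by its extensional counterpart. -/
def SForm.ext : SForm A → LForm A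
  | .base α => α
  | .iimp φ ψ => .eimp φ.ext ψ.ext
  | .iconj φ ψ => .econj φ.ext ψ.ext
  | .idisj φ ψ => .edisj φ.ext ψ.ext
  | .ineg φ => .eneg φ.ext

mutual
/-- Contextual weak negation −φ. -/
def wneg (p : A) : SForm A → SForm A
  | .base α => dia p (.ineg (.base α))
  | .ineg φ => wnegNeg p φ
  | .iimp φ ψ => dia p (.iconj φ (wneg p ψ))
  | .iconj φ ψ => .idisj (wneg p φ) (wneg p ψ)
  | .idisj φ ψ => .iconj (wneg p φ) (wneg p ψ)

/-- −¬φ, the weak negation of the intensional negation of φ. -/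
def wnegNeg (p : A) : SForm A → SForm A
  | .base α => dia p (.base α)
  | .ineg φ => wneg p φ
  | .iimp φ ψ => .iimp φ (wnegNeg p ψ)
  | .iconj φ ψ => .iconj (wnegNeg p φ) (wnegNeg p ψ)
  | .idisj φ ψ => .idisj (wnegNeg p φ) (wnegNeg p ψ)
end

/-- The Fitch-style natural deduction system. Round-bracket (restricted)
subproofs keep only the safe formulas of the ambient premises. -/
inductive Deriv (p : A) : Set (SForm A) → SForm A → Prop where
  | hyp {Δ φ} : φ ∈ Δ → Deriv p Δ φ
  -- extensional rules
  | iEConj {Δ α β} : Deriv p Δ (.base α) → Deriv p Δ (.base β) →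
      Deriv p Δ (.base (.econj α β))
  | eEConj₁ {Δ α β} : Deriv p Δ (.base (.econj α β)) → Deriv p Δ (.base α)
  | eEConj₂ {Δ α β} : Deriv p Δ (.base (.econj α β)) → Deriv p Δ (.base β)
  | iEDisj₁ {Δ α β} : Deriv p Δ (.base α) → Deriv p Δ (.base (.edisj α β))
  | iEDisj₂ {Δ α β} : Deriv p Δ (.base β) → Deriv p Δ (.base (.edisj α β))
  | eEDisj {Δ α β γ} : Deriv p Δ (.base (.edisj α β)) →
      Deriv p (insert (.base α) (safePart Δ)) (.base γ) →
      Deriv p (insert (.base β) (safePart Δ)) (.base γ) →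
      Deriv p Δ (.base γ)
  | iEImp {Δ α β} : Deriv p (insert (.base α) (safePart Δ)) (.base β) →
      Deriv p Δ (.base (.eimp α β))
  | eEImp {Δ α β} : Deriv p Δ (.base α) → Deriv p Δ (.base (.eimp α β)) →
      Deriv p Δ (.base β)
  | iENeg {Δ α} : Deriv p (insert (.base α) (safePart Δ)) (botF p) →
      Deriv p Δ (.base (.eneg α))
  | eENeg₁ {Δ α} : Deriv p Δ (.base α) → Deriv p Δ (.base (.eneg α)) →
      Deriv p Δ (botF p)
  | eENeg₂ {Δ α} : Deriv p Δ (.base (.eneg (.eneg α))) → Deriv p Δ (.base α)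
  -- intensional rules
  | iIConj {Δ φ ψ} : Deriv p Δ φ → Deriv p Δ ψ → Deriv p Δ (.iconj φ ψ)
  | eIConj₁ {Δ φ ψ} : Deriv p Δ (.iconj φ ψ) → Deriv p Δ φ
  | eIConj₂ {Δ φ ψ} : Deriv p Δ (.iconj φ ψ) → Deriv p Δ ψ
  | iIDisj₁ {Δ φ ψ} : Deriv p Δ φ → Deriv p Δ (.idisj φ ψ)
  | iIDisj₂ {Δ φ ψ} : Deriv p Δ ψ → Deriv p Δ (.idisj φ ψ)
  | eIDisj {Δ φ ψ χ} : Deriv p Δ (.idisj φ ψ) →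
      Deriv p (insert φ Δ) χ → Deriv p (insert ψ Δ) χ → Deriv p Δ χ
  | iIImp {Δ φ ψ} : Deriv p (insert φ (safePart Δ)) ψ → Deriv p Δ (.iimp φ ψ)
  | eIImp {Δ φ ψ} : Deriv p Δ φ → Deriv p Δ (.iimp φ ψ) → Deriv p Δ ψ
  | iINeg {Δ} {α : LForm A} : Deriv p (insert (.base α) (safePart Δ)) (botF p) →
      Deriv p Δ (.ineg (.base α))
  | eINeg {Δ φ} : Deriv p Δ φ → Deriv p Δ (.ineg φ) → Deriv p Δ (botF p)
  | efq {Δ φ} : Deriv p Δ (botF p) → Deriv p Δ φ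
  -- interaction rules
  | negNeg₁ {Δ φ} : Deriv p Δ (.ineg (.ineg φ)) → Deriv p Δ φ
  | negNeg₂ {Δ φ} : Deriv p Δ φ → Deriv p Δ (.ineg (.ineg φ))
  | negConj₁ {Δ φ ψ} : Deriv p Δ (.ineg (.iconj φ ψ)) →
      Deriv p Δ (.idisj (.ineg φ) (.ineg ψ))
  | negConj₂ {Δ φ ψ} : Deriv p Δ (.idisj (.ineg φ) (.ineg ψ)) →
      Deriv p Δ (.ineg (.iconj φ ψ))
  | negDisj₁ {Δ φ ψ} : Deriv p Δ (.ineg (.idisj φ ψ)) →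
      Deriv p Δ (.iconj (.ineg φ) (.ineg ψ))
  | negDisj₂ {Δ φ ψ} : Deriv p Δ (.iconj (.ineg φ) (.ineg ψ)) →
      Deriv p Δ (.ineg (.idisj φ ψ))
  | negImp₁ {Δ φ ψ} : Deriv p Δ (.ineg (.iimp φ ψ)) →
      Deriv p Δ (dia p (.iconj φ (.ineg ψ)))
  | negImp₂ {Δ φ ψ} : Deriv p Δ (dia p (.iconj φ (.ineg ψ))) →
      Deriv p Δ (.ineg (.iimp φ ψ))
  | cem {Δ φ} : Deriv p Δ (.idisj (.iimp φ (botF p)) (dia p φ))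
  | diaOplus {Δ} {l : List (LForm A)} : l ≠ [] →
      Deriv p Δ (bigIConj p (l.map fun α => dia p (.base α))) →
      Deriv p Δ (dia p (oplus p l))


/-! ### Auxiliary lemmas -/

lemma safePart_mono {Δ Δ' : Set (SForm A)} (h : Δ ⊆ Δ') : safePart Δ ⊆ safePart Δ' :=
  fun _ hx => ⟨h hx.1, hx.2⟩

lemma mem_safePart {Δ : Set (SForm A)} {φ : SForm A} (h : φ ∈ Δ) (hs : Safe φ) :
    φ ∈ safePart Δ := ⟨h, hs⟩

lemma safe_base (α : LForm A) : Safe (SForm.base α : SForm A) := Or.inl rfl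

lemma safe_ineg_base (α : LForm A) : Safe (SForm.ineg (.base α) : SForm A) := by
  left; simp [SForm.noImpUnderNeg, SForm.hasImp]

lemma safe_iimp (φ ψ : SForm A) : Safe (SForm.iimp φ ψ) := Or.inr ⟨φ, ψ, rfl⟩

lemma Deriv.weaken {p : A} {Δ : Set (SForm A)} {φ : SForm A} (h : Deriv p Δ φ)
    {Δ' : Set (SForm A)} (hs : Δ ⊆ Δ') : Deriv p Δ' φ := by
  induction h generalizing Δ' with
  | hyp h => exact .hyp (hs h)
  | iEConj _ _ ih1 ih2 => exact .iEConj (ih1 hs) (ih2 hs)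
  | eEConj₁ _ ih => exact .eEConj₁ (ih hs)
  | eEConj₂ _ ih => exact .eEConj₂ (ih hs)
  | iEDisj₁ _ ih => exact .iEDisj₁ (ih hs)
  | iEDisj₂ _ ih => exact .iEDisj₂ (ih hs)
  | eEDisj _ _ _ ih ih1 ih2 =>
      exact .eEDisj (ih hs) (ih1 (Set.insert_subset_insert (safePart_mono hs)))
        (ih2 (Set.insert_subset_insert (safePart_mono hs)))
  | iEImp _ ih => exact .iEImp (ih (Set.insert_subset_insert (safePart_mono hs)))
  | eEImp _ _ ih1 ih2 => exact .eEImp (ih1 hs) (ih2 hs)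
  | iENeg _ ih => exact .iENeg (ih (Set.insert_subset_insert (safePart_mono hs)))
  | eENeg₁ _ _ ih1 ih2 => exact .eENeg₁ (ih1 hs) (ih2 hs)
  | eENeg₂ _ ih => exact .eENeg₂ (ih hs)
  | iIConj _ _ ih1 ih2 => exact .iIConj (ih1 hs) (ih2 hs)
  | eIConj₁ _ ih => exact .eIConj₁ (ih hs)
  | eIConj₂ _ ih => exact .eIConj₂ (ih hs)
  | iIDisj₁ _ ih => exact .iIDisj₁ (ih hs)
  | iIDisj₂ _ ih => exact .iIDisj₂ (ih hs)
  | eIDisj _ _ _ ih ih1 ih2 =>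
      exact .eIDisj (ih hs) (ih1 (Set.insert_subset_insert hs)) (ih2 (Set.insert_subset_insert hs))
  | iIImp _ ih => exact .iIImp (ih (Set.insert_subset_insert (safePart_mono hs)))
  | eIImp _ _ ih1 ih2 => exact .eIImp (ih1 hs) (ih2 hs)
  | iINeg _ ih => exact .iINeg (ih (Set.insert_subset_insert (safePart_mono hs)))
  | eINeg _ _ ih1 ih2 => exact .eINeg (ih1 hs) (ih2 hs)
  | efq _ ih => exact .efq (ih hs)
  | negNeg₁ _ ih => exact .negNeg₁ (ih hs)
  | negNeg₂ _ ih => exact .negNeg₂ (ih hs)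
  | negConj₁ _ ih => exact .negConj₁ (ih hs)
  | negConj₂ _ ih => exact .negConj₂ (ih hs)
  | negDisj₁ _ ih => exact .negDisj₁ (ih hs)
  | negDisj₂ _ ih => exact .negDisj₂ (ih hs)
  | negImp₁ _ ih => exact .negImp₁ (ih hs)
  | negImp₂ _ ih => exact .negImp₂ (ih hs)
  | cem => exact .cem
  | diaOplus hne _ ih => exact .diaOplus hne (ih hs)

/-- From the hypothesis `¬α → ⊥` one can recover the base formula `α`. -/
lemma base_of_impbot {p : A} {α : LForm A} {Δ : Set (SForm A)}
    (h : SForm.iimp (.ineg (.base α)) (botF p) ∈ Δ) : Deriv p Δ (.base α) := by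
  apply Deriv.eENeg₂ (α := α)
  apply Deriv.iENeg
  have himp : SForm.iimp (.ineg (.base α)) (botF p)
      ∈ insert (SForm.base (.eneg α)) (safePart Δ) :=
    Set.mem_insert_of_mem _ (mem_safePart h (safe_iimp _ _))
  have hneg : Deriv p (insert (SForm.base (.eneg α)) (safePart Δ)) (.ineg (.base α)) := by
    apply Deriv.iINeg
    exact Deriv.eENeg₁ (.hyp (Set.mem_insert _ _))
      (.hyp (Set.mem_insert_of_mem _ (mem_safePart (Set.mem_insert _ _) (safe_base _))))
  exact Deriv.eIImp hneg (.hyp himp)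

/-- From the hypothesis `α → ⊥` one can derive `¬α`. -/
lemma negbase_of_impbot {p : A} {α : LForm A} {Δ : Set (SForm A)}
    (h : SForm.iimp (.base α) (botF p) ∈ Δ) : Deriv p Δ (.ineg (.base α)) := by
  apply Deriv.iINeg
  exact Deriv.eIImp (.hyp (Set.mem_insert _ _))
    (.hyp (Set.mem_insert_of_mem _ (mem_safePart h (safe_iimp _ _))))

/-- `⊢ α → (¬α → ⊥)`. -/
lemma curry_base (p : A) (α : LForm A) (Δ : Set (SForm A)) :
    Deriv p Δ (.iimp (.base α) (.iimp (.ineg (.base α)) (botF p))) := by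
  apply Deriv.iIImp
  apply Deriv.iIImp
  exact Deriv.eINeg
    (.hyp (Set.mem_insert_of_mem _ (mem_safePart (Set.mem_insert _ _) (safe_base α))))
    (.hyp (Set.mem_insert _ _))

/-- `⊢ ¬α → (α → ⊥)`. -/
lemma curry_base_neg (p : A) (α : LForm A) (Δ : Set (SForm A)) :
    Deriv p Δ (.iimp (.ineg (.base α)) (.iimp (.base α) (botF p))) := by
  apply Deriv.iIImp
  apply Deriv.iIImp
  exact Deriv.eINeg (.hyp (Set.mem_insert _ _))
    (.hyp (Set.mem_insert_of_mem _ (mem_safePart (Set.mem_insert _ _) (safe_ineg_base α))))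

/-- Weak excluded middle for contextual weak negation: `⊢ φ ∨ −φ`, and `⊢ ¬φ ∨ −¬φ`. -/
lemma lem_both (p : A) (φ : SForm A) :
    (∀ Δ : Set (SForm A), Deriv p Δ (.idisj φ (wneg p φ))) ∧
    (∀ Δ : Set (SForm A), Deriv p Δ (.idisj (.ineg φ) (wnegNeg p φ))) := by
  induction φ with
  | base α =>
    constructor
    · intro Δ
      simp only [wneg]
      refine Deriv.eIDisj (Deriv.cem (φ := .ineg (.base α))) ?_ ?_
      · exact Deriv.iIDisj₁ (base_of_impbot (Set.mem_insert _ _))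
      · exact Deriv.iIDisj₂ (.hyp (Set.mem_insert _ _))
    · intro Δ
      simp only [wnegNeg]
      refine Deriv.eIDisj (Deriv.cem (φ := .base α)) ?_ ?_
      · exact Deriv.iIDisj₁ (negbase_of_impbot (Set.mem_insert _ _))
      · exact Deriv.iIDisj₂ (.hyp (Set.mem_insert _ _))
  | iimp φ ψ ihφ ihψ =>
    constructor
    · intro Δ
      simp only [wneg]
      refine Deriv.eIDisj (Deriv.cem (φ := .iconj φ (wneg p ψ))) ?_ ?_
      · apply Deriv.iIDisj₁
        apply Deriv.iIImp
        have himp : SForm.iimp (.iconj φ (wneg p ψ)) (botF p)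
            ∈ insert φ (safePart (insert (SForm.iimp (.iconj φ (wneg p ψ)) (botF p)) Δ)) :=
          Set.mem_insert_of_mem _ (mem_safePart (Set.mem_insert _ _) (safe_iimp _ _))
        refine Deriv.eIDisj ((ihψ.1) _) (.hyp (Set.mem_insert _ _)) ?_
        apply Deriv.efq
        exact Deriv.eIImp
          (Deriv.iIConj (.hyp (Set.mem_insert_of_mem _ (Set.mem_insert _ _)))
            (.hyp (Set.mem_insert _ _)))
          (.hyp (Set.mem_insert_of_mem _ himp))
      · exact Deriv.iIDisj₂ (.hyp (Set.mem_insert _ _))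
    · intro Δ
      simp only [wnegNeg]
      refine Deriv.eIDisj (Deriv.cem (φ := .iconj φ (.ineg ψ))) ?_ ?_
      · apply Deriv.iIDisj₂
        apply Deriv.iIImp
        have himp : SForm.iimp (.iconj φ (.ineg ψ)) (botF p)
            ∈ insert φ (safePart (insert (SForm.iimp (.iconj φ (.ineg ψ)) (botF p)) Δ)) :=
          Set.mem_insert_of_mem _ (mem_safePart (Set.mem_insert _ _) (safe_iimp _ _))
        refine Deriv.eIDisj ((ihψ.2) _) ?_ (.hyp (Set.mem_insert _ _))
        apply Deriv.efq
        exact Deriv.eIImp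
          (Deriv.iIConj (.hyp (Set.mem_insert_of_mem _ (Set.mem_insert _ _)))
            (.hyp (Set.mem_insert _ _)))
          (.hyp (Set.mem_insert_of_mem _ himp))
      · exact Deriv.iIDisj₁ (Deriv.negImp₂ (.hyp (Set.mem_insert _ _)))
  | iconj φ ψ ihφ ihψ =>
    constructor
    · intro Δ
      simp only [wneg]
      refine Deriv.eIDisj ((ihφ.1) Δ) ?_ ?_
      · refine Deriv.eIDisj ((ihψ.1) _) ?_ ?_
        · exact Deriv.iIDisj₁ (Deriv.iIConj
            (.hyp (Set.mem_insert_of_mem _ (Set.mem_insert _ _))) (.hyp (Set.mem_insert _ _)))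
        · exact Deriv.iIDisj₂ (Deriv.iIDisj₂ (.hyp (Set.mem_insert _ _)))
      · exact Deriv.iIDisj₂ (Deriv.iIDisj₁ (.hyp (Set.mem_insert _ _)))
    · intro Δ
      simp only [wnegNeg]
      refine Deriv.eIDisj ((ihφ.2) Δ) ?_ ?_
      · exact Deriv.iIDisj₁ (Deriv.negConj₂ (Deriv.iIDisj₁ (.hyp (Set.mem_insert _ _))))
      · refine Deriv.eIDisj ((ihψ.2) _) ?_ ?_
        · exact Deriv.iIDisj₁ (Deriv.negConj₂ (Deriv.iIDisj₂ (.hyp (Set.mem_insert _ _))))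
        · exact Deriv.iIDisj₂ (Deriv.iIConj
            (.hyp (Set.mem_insert_of_mem _ (Set.mem_insert _ _))) (.hyp (Set.mem_insert _ _)))
  | idisj φ ψ ihφ ihψ =>
    constructor
    · intro Δ
      simp only [wneg]
      refine Deriv.eIDisj ((ihφ.1) Δ) ?_ ?_
      · exact Deriv.iIDisj₁ (Deriv.iIDisj₁ (.hyp (Set.mem_insert _ _)))
      · refine Deriv.eIDisj ((ihψ.1) _) ?_ ?_
        · exact Deriv.iIDisj₁ (Deriv.iIDisj₂ (.hyp (Set.mem_insert _ _)))
        · exact Deriv.iIDisj₂ (Deriv.iIConj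
            (.hyp (Set.mem_insert_of_mem _ (Set.mem_insert _ _))) (.hyp (Set.mem_insert _ _)))
    · intro Δ
      simp only [wnegNeg]
      refine Deriv.eIDisj ((ihφ.2) Δ) ?_ ?_
      · refine Deriv.eIDisj ((ihψ.2) _) ?_ ?_
        · exact Deriv.iIDisj₁ (Deriv.negDisj₂ (Deriv.iIConj
            (.hyp (Set.mem_insert_of_mem _ (Set.mem_insert _ _))) (.hyp (Set.mem_insert _ _))))
        · exact Deriv.iIDisj₂ (Deriv.iIDisj₂ (.hyp (Set.mem_insert _ _)))
      · exact Deriv.iIDisj₂ (Deriv.iIDisj₁ (.hyp (Set.mem_insert _ _)))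
  | ineg φ ihφ =>
    constructor
    · intro Δ
      simp only [wneg]
      exact (ihφ.2) Δ
    · intro Δ
      simp only [wnegNeg]
      refine Deriv.eIDisj ((ihφ.1) Δ) ?_ ?_
      · exact Deriv.iIDisj₁ (Deriv.negNeg₂ (.hyp (Set.mem_insert _ _)))
      · exact Deriv.iIDisj₂ (.hyp (Set.mem_insert _ _))

/-- Contradiction lemmas: `φ, −φ ⊢ ⊥` and `¬φ, −¬φ ⊢ ⊥`. -/
lemma contra_both (p : A) (φ : SForm A) :
    (∀ Δ : Set (SForm A), Deriv p Δ φ → Deriv p Δ (wneg p φ) → Deriv p Δ (botF p)) ∧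
    (∀ Δ : Set (SForm A), Deriv p Δ (.ineg φ) → Deriv p Δ (wnegNeg p φ) →
      Deriv p Δ (botF p)) := by
  induction φ with
  | base α =>
    constructor
    · intro Δ h1 h2
      simp only [wneg, dia] at h2
      exact Deriv.eINeg (Deriv.eIImp h1 (curry_base p α Δ)) h2
    · intro Δ h1 h2
      simp only [wnegNeg, dia] at h2
      exact Deriv.eINeg (Deriv.eIImp h1 (curry_base_neg p α Δ)) h2
  | iimp φ ψ ihφ ihψ =>
    constructor
    · intro Δ h1 h2
      simp only [wneg, dia] at h2
      have curry : Deriv p Δ (.iimp (.iimp φ ψ)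
          (.iimp (.iconj φ (wneg p ψ)) (botF p))) := by
        apply Deriv.iIImp
        apply Deriv.iIImp
        have himp : SForm.iimp φ ψ
            ∈ insert (SForm.iconj φ (wneg p ψ))
              (safePart (insert (SForm.iimp φ ψ) (safePart Δ))) :=
          Set.mem_insert_of_mem _ (mem_safePart (Set.mem_insert _ _) (safe_iimp _ _))
        refine (ihψ.1) _ ?_ ?_
        · exact Deriv.eIImp (Deriv.eIConj₁ (.hyp (Set.mem_insert _ _))) (.hyp himp)
        · exact Deriv.eIConj₂ (.hyp (Set.mem_insert _ _))
      exact Deriv.eINeg (Deriv.eIImp h1 curry) h2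
    · intro Δ h1 h2
      simp only [wnegNeg] at h2
      have h1' := Deriv.negImp₁ h1
      simp only [dia] at h1'
      have curry : Deriv p Δ (.iimp (.iimp φ (wnegNeg p ψ))
          (.iimp (.iconj φ (.ineg ψ)) (botF p))) := by
        apply Deriv.iIImp
        apply Deriv.iIImp
        have himp : SForm.iimp φ (wnegNeg p ψ)
            ∈ insert (SForm.iconj φ (.ineg ψ))
              (safePart (insert (SForm.iimp φ (wnegNeg p ψ)) (safePart Δ))) :=
          Set.mem_insert_of_mem _ (mem_safePart (Set.mem_insert _ _) (safe_iimp _ _))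
        refine (ihψ.2) _ ?_ ?_
        · exact Deriv.eIConj₂ (.hyp (Set.mem_insert _ _))
        · exact Deriv.eIImp (Deriv.eIConj₁ (.hyp (Set.mem_insert _ _))) (.hyp himp)
      exact Deriv.eINeg (Deriv.eIImp h2 curry) h1'
  | iconj φ ψ ihφ ihψ =>
    constructor
    · intro Δ h1 h2
      simp only [wneg] at h2
      refine Deriv.eIDisj h2 ?_ ?_
      · exact (ihφ.1) _ ((Deriv.eIConj₁ h1).weaken (Set.subset_insert _ _))
          (.hyp (Set.mem_insert _ _))
      · exact (ihψ.1) _ ((Deriv.eIConj₂ h1).weaken (Set.subset_insert _ _))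
          (.hyp (Set.mem_insert _ _))
    · intro Δ h1 h2
      simp only [wnegNeg] at h2
      refine Deriv.eIDisj (Deriv.negConj₁ h1) ?_ ?_
      · exact (ihφ.2) _ (.hyp (Set.mem_insert _ _))
          ((Deriv.eIConj₁ h2).weaken (Set.subset_insert _ _))
      · exact (ihψ.2) _ (.hyp (Set.mem_insert _ _))
          ((Deriv.eIConj₂ h2).weaken (Set.subset_insert _ _))
  | idisj φ ψ ihφ ihψ =>
    constructor
    · intro Δ h1 h2
      simp only [wneg] at h2
      refine Deriv.eIDisj h1 ?_ ?_
      · exact (ihφ.1) _ (.hyp (Set.mem_insert _ _))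
          ((Deriv.eIConj₁ h2).weaken (Set.subset_insert _ _))
      · exact (ihψ.1) _ (.hyp (Set.mem_insert _ _))
          ((Deriv.eIConj₂ h2).weaken (Set.subset_insert _ _))
    · intro Δ h1 h2
      simp only [wnegNeg] at h2
      refine Deriv.eIDisj h2 ?_ ?_
      · exact (ihφ.2) _ ((Deriv.eIConj₁ (Deriv.negDisj₁ h1)).weaken (Set.subset_insert _ _))
          (.hyp (Set.mem_insert _ _))
      · exact (ihψ.2) _ ((Deriv.eIConj₂ (Deriv.negDisj₁ h1)).weaken (Set.subset_insert _ _))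
          (.hyp (Set.mem_insert _ _))
  | ineg φ ihφ =>
    constructor
    · intro Δ h1 h2
      simp only [wneg] at h2
      exact (ihφ.2) Δ h1 h2
    · intro Δ h1 h2
      simp only [wnegNeg] at h2
      exact (ihφ.1) Δ (Deriv.negNeg₁ h1) h2

theorem not_deriv_iff_wneg_consistent (p : A) (Δ : Finset (SForm A)) (φ : SForm A) :
    ¬ Deriv p (↑Δ) φ ↔ ¬ Deriv p (insert (wneg p φ) (↑Δ : Set (SForm A))) (botF p) := by
  constructor
  · intro h hb
    exact h (Deriv.eIDisj ((lem_both p φ).1 ↑Δ) (.hyp (Set.mem_insert _ _)) (Deriv.efq hb))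
  · intro h hd
    exact h ((contra_both p φ).1 _ (hd.weaken (Set.subset_insert _ _))
      (.hyp (Set.mem_insert _ _)))

end LAD
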